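/- arXiv:2109.11414 — 2 statements merged into one kernel-verified Lean document; each statement's English description precedes it below -/
import Mathlib

section
/- Let ε ∈ (0,1], suppose μ0 s ≥ 1, max_{j,ℓ} |b_j[ℓ]|² ≤ μ0, and suppose the local RIP event ‖P_T (G G* − G A* A G*) P_T‖ ≤ ε holds, where T is the tangent space at the rank-r matrix Z♮ = H(X♮). Let Z^t ∈ C^{s n1 × n2} be any rank-r matrix with ‖Z^t − Z♮‖_F ≤ σ_r(Z♮) ε / (16 √((1+ε) μ0 s)) and let T_t be the tangent space at Z^t. Then ‖A G* P_{T_t}‖ ≤ 3 √(1+ε), where the operator norm is from (C^{s n1 × n2}, Frobenius norm) to (C^n, ℓ2 norm). -/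
open Matrix MeasureTheory ProbabilityTheory
open scoped BigOperators ComplexConjugate

noncomputable section

/-- Frobenius norm of a complex matrix. -/
def frob {m p : Type*} [Fintype m] [Fintype p] (X : Matrix m p ℂ) : ℝ :=
  Real.sqrt (∑ i, ∑ j, ‖X i j‖ ^ 2)

/-- Euclidean (ℓ2) norm of a complex vector. -/
def l2 {m : Type*} [Fintype m] (v : m → ℂ) : ℝ :=
  Real.sqrt (∑ i, ‖v i‖ ^ 2)

/-- Frobenius inner product ⟨A, B⟩ = trace(Aᴴ B). -/
def frobInner {m p : Type*} [Fintype m] [Fintype p] (A B : Matrix m p ℂ) : ℂ :=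
  ∑ i, ∑ j, conj (A i j) * B i j

/-- Spectral norm (ℓ2 → ℓ2 operator norm). -/
def specNorm {m p : Type*} [Fintype m] [Fintype p] (Z : Matrix m p ℂ) : ℝ :=
  sSup {t | ∃ v : p → ℂ, (∑ j, ‖v j‖ ^ 2) ≤ 1 ∧ t = l2 (Z.mulVec v)}

/-- The `k`-th largest singular value (1-indexed), characterized as the distance
in spectral norm to the set of matrices of rank < k. -/
def sval {m p : Type*} [Fintype m] [Fintype p] (Z : Matrix m p ℂ) (k : ℕ) : ℝ :=
  sInf {t | ∃ Y : Matrix m p ℂ, Y.rank < k ∧ t = specNorm (Z - Y)}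

/-- The vectorized Hankel lift. -/
def vhl {s n n1 n2 : ℕ} (hn : n1 + n2 = n + 1) (X : Matrix (Fin s) (Fin n) ℂ) :
    Matrix (Fin n1 × Fin s) (Fin n2) ℂ :=
  Matrix.of fun p k => X p.2 ⟨p.1.1 + k.1, by have h1 := p.1.2; have h2 := k.2; omega⟩

/-- The adjoint of the vectorized Hankel lift. -/
def vhlAdj {s n1 n2 : ℕ} (n : ℕ) (Z : Matrix (Fin n1 × Fin s) (Fin n2) ℂ) :
    Matrix (Fin s) (Fin n) ℂ :=
  Matrix.of fun ℓ i => ∑ j : Fin n1, ∑ k : Fin n2, if j.1 + k.1 = i.1 then Z (j, ℓ) k else 0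

/-- The Hankel weight w_i = #{(j,k) : j + k = i, 0 ≤ j < n1, 0 ≤ k < n2}. -/
def wt (n1 n2 i : ℕ) : ℕ :=
  (Finset.univ.filter (fun p : Fin n1 × Fin n2 => p.1.1 + p.2.1 = i)).card

/-- The operator D⁻¹ : divide the i-th column by √w_i. -/
def Dinv (n1 n2 : ℕ) {s n : ℕ} (X : Matrix (Fin s) (Fin n) ℂ) : Matrix (Fin s) (Fin n) ℂ :=
  Matrix.of fun ℓ i => X ℓ i / (Real.sqrt (wt n1 n2 i.1) : ℂ)

/-- The operator D⁻² : divide the i-th column by w_i. -/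
def Dinv2 (n1 n2 : ℕ) {s n : ℕ} (X : Matrix (Fin s) (Fin n) ℂ) : Matrix (Fin s) (Fin n) ℂ :=
  Matrix.of fun ℓ i => X ℓ i / ((wt n1 n2 i.1 : ℝ) : ℂ)

/-- G = H ∘ D⁻¹. -/
def calG {s n n1 n2 : ℕ} (hn : n1 + n2 = n + 1) (X : Matrix (Fin s) (Fin n) ℂ) :
    Matrix (Fin n1 × Fin s) (Fin n2) ℂ :=
  vhl hn (Dinv n1 n2 X)

/-- G* = D⁻¹ ∘ H*. -/
def calGadj {s n n1 n2 : ℕ} (_hn : n1 + n2 = n + 1) (Z : Matrix (Fin n1 × Fin s) (Fin n2) ℂ) :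
    Matrix (Fin s) (Fin n) ℂ :=
  Dinv n1 n2 (vhlAdj n Z)

/-- H† = D⁻² ∘ H*, the Moore–Penrose pseudo-inverse of H. -/
def hdag {s n1 n2 : ℕ} (n : ℕ) (Z : Matrix (Fin n1 × Fin s) (Fin n2) ℂ) :
    Matrix (Fin s) (Fin n) ℂ :=
  Dinv2 n1 n2 (vhlAdj n Z)

/-- The measurement operator A(X)[j] = b_jᴴ X e_j. -/
def measA {s n : ℕ} (b : Fin n → Fin s → ℂ) (X : Matrix (Fin s) (Fin n) ℂ) : Fin n → ℂ :=
  fun j => ∑ ℓ, conj (b j ℓ) * X ℓ j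

/-- The adjoint measurement operator A*(y) = Σ_j y[j] b_j e_jᵀ. -/
def measAadj {s n : ℕ} (b : Fin n → Fin s → ℂ) (y : Fin n → ℂ) : Matrix (Fin s) (Fin n) ℂ :=
  Matrix.of fun ℓ j => y j * b j ℓ

/-- Orthogonal projection onto the tangent space determined by U and V. -/
def projT {m p : Type*} [Fintype m] [Fintype p] {r : ℕ}
    (U : Matrix m (Fin r) ℂ) (V : Matrix p (Fin r) ℂ) (W : Matrix m p ℂ) : Matrix m p ℂ :=
  U * Uᴴ * W + W * V * Vᴴ - U * Uᴴ * W * V * Vᴴ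

/-- Y is a best rank-r approximation (in Frobenius norm) of W. -/
def bestRankApprox {m p : Type*} [Fintype m] [Fintype p] (r : ℕ) (Y W : Matrix m p ℂ) : Prop :=
  Y.rank ≤ r ∧ ∀ Y' : Matrix m p ℂ, Y'.rank ≤ r → frob (W - Y) ≤ frob (W - Y')

/-- The vector a_τ = (1, e^{-2πiτ}, ..., e^{-2πiτ(n-1)})ᵀ. -/
def atau (n : ℕ) (τ : ℝ) : Fin n → ℂ :=
  fun i => Complex.exp (-2 * Real.pi * Complex.I * τ * i)

/-- The ground truth X♮ = Σ_k d_k h_k a_{τ_k}ᵀ. -/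
def groundTruth (s n r : ℕ) (d : Fin r → ℂ) (h : Fin r → Fin s → ℂ) (τ : Fin r → ℝ) :
    Matrix (Fin s) (Fin n) ℂ :=
  Matrix.of fun ℓ i => ∑ k, d k * h k ℓ * atau n (τ k) i

/-!
Put `W = P_{T_t} Z` and split `W = P_T W + (W - P_T W)`. On the reference tangent space the
local RIP controls `A G*`: since `G*` and `P_T` are contractions and `G*`, `A*` are the adjoints
of `G`, `A`,
`‖A G* P_T W‖² = ‖G* P_T W‖² - Re ⟨P_T W, P_T (G G* - G A* A G*) P_T W⟩ ≤ (1 + ε) ‖W‖²`,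
while on the remainder only the crude bound `‖A G*‖ ≤ √(μ₀ s)` is available. The remainder is
small because `T_t` is close to `T`: `W - P_T W = (I - U Uᴴ) W (I - V Vᴴ)`, whose norm is at most
`(‖(I - U Uᴴ) U_t‖_F + ‖(I - V Vᴴ) V_t‖_F) ‖W‖_F`, and both angles are at most
`‖Z^t - Z♮‖_F / σ_r(Z^t)`, where `σ_r(Z^t) ≥ σ_r(Z♮) - ‖Z^t - Z♮‖ ≥ 15 σ_r(Z♮) / 16` by Weyl's
inequality. The closeness assumption then gives `√(μ₀ s) ‖W - P_T W‖_F ≤ 2 √(1 + ε) ‖W‖_F / 15`.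
-/

open scoped Matrix.Norms.L2Operator

section Norms
variable {m p q : Type*}

def euclideanVec (X : Matrix m p ℂ) : EuclideanSpace ℂ (m × p) :=
  WithLp.toLp 2 fun q => X q.1 q.2

lemma euclideanVec_add (X Y : Matrix m p ℂ) :
    euclideanVec (X + Y) = euclideanVec X + euclideanVec Y := rfl

lemma euclideanVec_sub (X Y : Matrix m p ℂ) :
    euclideanVec (X - Y) = euclideanVec X - euclideanVec Y := rfl

lemma mul_col_eq_mulVec [Fintype p] (A : Matrix m p ℂ) (B : Matrix p q ℂ) (k : q) :
    (fun i => (A * B) i k) = A *ᵥ fun j => B j k := by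
  ext i
  simp [Matrix.mul_apply, Matrix.mulVec, dotProduct]

variable [Fintype m] [Fintype p] [Fintype q]

lemma l2_eq_norm (v : m → ℂ) : l2 v = ‖WithLp.toLp 2 v‖ := by
  rw [EuclideanSpace.norm_eq]; rfl

lemma frob_eq_norm (X : Matrix m p ℂ) : frob X = ‖euclideanVec X‖ := by
  rw [EuclideanSpace.norm_eq, Fintype.sum_prod_type]; rfl

lemma frobInner_eq_inner (A B : Matrix m p ℂ) :
    frobInner A B = inner ℂ (euclideanVec A) (euclideanVec B) := by
  simp [frobInner, euclideanVec, PiLp.inner_apply, Fintype.sum_prod_type, mul_comm]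

lemma frob_nonneg (X : Matrix m p ℂ) : 0 ≤ frob X := Real.sqrt_nonneg _

lemma l2_nonneg (v : m → ℂ) : 0 ≤ l2 v := Real.sqrt_nonneg _

lemma frob_sq (X : Matrix m p ℂ) : frob X ^ 2 = ∑ i, ∑ j, ‖X i j‖ ^ 2 :=
  Real.sq_sqrt (by positivity)

lemma l2_sq (v : m → ℂ) : l2 v ^ 2 = ∑ i, ‖v i‖ ^ 2 :=
  Real.sq_sqrt (by positivity)

lemma l2_pos {v : m → ℂ} (hv : v ≠ 0) : 0 < l2 v := by
  rw [l2_eq_norm, norm_pos_iff]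
  exact fun h => hv (congrArg WithLp.ofLp h)

lemma l2_add_le (u v : m → ℂ) : l2 (u + v) ≤ l2 u + l2 v := by
  simp only [l2_eq_norm, WithLp.toLp_add]
  exact norm_add_le _ _

lemma l2_smul (c : ℂ) (v : m → ℂ) : l2 (c • v) = ‖c‖ * l2 v := by
  rw [l2_eq_norm, l2_eq_norm, WithLp.toLp_smul, norm_smul]

lemma frob_add_le (X Y : Matrix m p ℂ) : frob (X + Y) ≤ frob X + frob Y := by
  simp only [frob_eq_norm, euclideanVec_add]
  exact norm_add_le _ _

lemma frob_sub_comm (X Y : Matrix m p ℂ) : frob (X - Y) = frob (Y - X) := by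
  simp only [frob_eq_norm, euclideanVec_sub]
  exact norm_sub_rev _ _

lemma frob_conjTranspose (X : Matrix m p ℂ) : frob Xᴴ = frob X := by
  rw [frob, frob, Finset.sum_comm]
  simp

lemma frob_sq_eq_sum_l2_sq (X : Matrix m p ℂ) : frob X ^ 2 = ∑ k, l2 (fun i => X i k) ^ 2 := by
  simp only [frob_sq, l2_sq]
  exact Finset.sum_comm

lemma frob_replicateCol (v : m → ℂ) : frob (Matrix.replicateCol (Fin 1) v) = l2 v := by
  simp [frob, l2]

lemma norm_frobInner_le (A B : Matrix m p ℂ) : ‖frobInner A B‖ ≤ frob A * frob B := by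
  rw [frobInner_eq_inner, frob_eq_norm, frob_eq_norm]
  exact norm_inner_le_norm _ _

lemma frobInner_sub_right (A B C : Matrix m p ℂ) :
    frobInner A (B - C) = frobInner A B - frobInner A C := by
  simp only [frobInner_eq_inner, euclideanVec_sub, inner_sub_right]

lemma re_frobInner_self (A : Matrix m p ℂ) : (frobInner A A).re = frob A ^ 2 := by
  rw [frobInner_eq_inner, frob_eq_norm]
  exact inner_self_eq_norm_sq (𝕜 := ℂ) _

lemma frobInner_eq_trace (A B : Matrix m p ℂ) : frobInner A B = (Aᴴ * B).trace := by
  simp only [frobInner, Matrix.trace, Matrix.diag_apply, Matrix.mul_apply,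
    Matrix.conjTranspose_apply, RCLike.star_def]
  exact Finset.sum_comm

lemma l2_mulVec_le_frob_mul (A : Matrix m p ℂ) (v : p → ℂ) : l2 (A *ᵥ v) ≤ frob A * l2 v := by
  refine abs_le_of_sq_le_sq' ?_ (mul_nonneg (frob_nonneg A) (l2_nonneg v)) |>.2
  rw [mul_pow, l2_sq, l2_sq, frob_sq, Finset.sum_mul]
  refine Finset.sum_le_sum fun i _ => ?_
  calc ‖(A *ᵥ v) i‖ ^ 2 ≤ (∑ j, ‖A i j‖ * ‖v j‖) ^ 2 := by
        gcongr
        simpa only [Matrix.mulVec, dotProduct, norm_mul] using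
          norm_sum_le Finset.univ fun j => A i j * v j
    _ ≤ (∑ j, ‖A i j‖ ^ 2) * ∑ j, ‖v j‖ ^ 2 := Finset.sum_mul_sq_le_sq_mul_sq _ _ _

lemma mul_frob_le_frob_mul {M : Matrix m p ℂ} {c : ℝ} (hc : 0 ≤ c)
    (hM : ∀ u, c * l2 u ≤ l2 (M *ᵥ u)) (X : Matrix p q ℂ) : c * frob X ≤ frob (M * X) := by
  refine abs_le_of_sq_le_sq' ?_ (frob_nonneg _) |>.2
  rw [mul_pow, frob_sq_eq_sum_l2_sq, frob_sq_eq_sum_l2_sq, Finset.mul_sum]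
  refine Finset.sum_le_sum fun k _ => ?_
  rw [← mul_pow, mul_col_eq_mulVec]
  exact pow_le_pow_left₀ (mul_nonneg hc (l2_nonneg _)) (hM _) 2

lemma l2_mulVec_le [DecidableEq p] (A : Matrix m p ℂ) (v : p → ℂ) :
    l2 (A *ᵥ v) ≤ ‖A‖ * l2 v := by
  rw [l2_eq_norm, l2_eq_norm]
  exact A.l2_opNorm_mulVec (WithLp.toLp 2 v)

lemma opNorm_le_frob [DecidableEq p] (A : Matrix m p ℂ) : ‖A‖ ≤ frob A := by
  rw [Matrix.l2_opNorm_def]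
  refine ContinuousLinearMap.opNorm_le_bound _ (frob_nonneg A) fun v => ?_
  have h := l2_mulVec_le_frob_mul A v.ofLp
  rwa [l2_eq_norm, l2_eq_norm] at h

lemma frob_mul_le_opNorm_mul [DecidableEq p] (A : Matrix m p ℂ) (B : Matrix p q ℂ) :
    frob (A * B) ≤ ‖A‖ * frob B := by
  refine abs_le_of_sq_le_sq' ?_ (mul_nonneg (norm_nonneg _) (frob_nonneg B)) |>.2
  rw [mul_pow, frob_sq_eq_sum_l2_sq, frob_sq_eq_sum_l2_sq, Finset.mul_sum]
  refine Finset.sum_le_sum fun k _ => ?_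
  rw [← mul_pow, mul_col_eq_mulVec]
  exact pow_le_pow_left₀ (l2_nonneg _) (l2_mulVec_le _ _) 2

lemma frob_mul_le_frob_mul_opNorm [DecidableEq p] [DecidableEq q] (A : Matrix m p ℂ)
    (B : Matrix p q ℂ) : frob (A * B) ≤ frob A * ‖B‖ := by
  rw [← frob_conjTranspose, Matrix.conjTranspose_mul, ← Matrix.l2_opNorm_conjTranspose B,
    ← frob_conjTranspose A, mul_comm]
  exact frob_mul_le_opNorm_mul _ _

lemma opNorm_mul_le_of_opNorm_le_one_left [DecidableEq p] [DecidableEq q] {A : Matrix m p ℂ}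
    (hA : ‖A‖ ≤ 1) (X : Matrix p q ℂ) : ‖A * X‖ ≤ ‖X‖ :=
  (Matrix.l2_opNorm_mul A X).trans (mul_le_of_le_one_left (norm_nonneg X) hA)

lemma opNorm_mul_le_of_opNorm_le_one_right [DecidableEq p] [DecidableEq q] {B : Matrix p q ℂ}
    (hB : ‖B‖ ≤ 1) (X : Matrix m p ℂ) : ‖X * B‖ ≤ ‖X‖ :=
  (Matrix.l2_opNorm_mul X B).trans (mul_le_of_le_one_right (norm_nonneg X) hB)

variable {r : ℕ} {U : Matrix m (Fin r) ℂ}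

lemma opNorm_le_one_of_isometry (hU : Uᴴ * U = 1) : ‖U‖ ≤ 1 := by
  have h := Matrix.l2_opNorm_conjTranspose_mul_self U
  have h1 : ‖(1 : Matrix (Fin r) (Fin r) ℂ)‖ ≤ 1 := by
    rw [← Matrix.diagonal_one, Matrix.l2_opNorm_diagonal]
    exact (pi_norm_le_iff_of_nonneg zero_le_one).2 fun _ => by simp
  rw [hU] at h
  nlinarith [norm_nonneg U]

lemma opNorm_conjTranspose_le_one_of_isometry [DecidableEq m] (hU : Uᴴ * U = 1) : ‖Uᴴ‖ ≤ 1 := by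
  rw [Matrix.l2_opNorm_conjTranspose]
  exact opNorm_le_one_of_isometry hU

lemma opNorm_one_sub_le_one [DecidableEq m] (hU : Uᴴ * U = 1) : ‖1 - U * Uᴴ‖ ≤ 1 := by
  have hP2 : U * Uᴴ * (U * Uᴴ) = U * Uᴴ := by
    rw [Matrix.mul_assoc, ← Matrix.mul_assoc Uᴴ, hU, Matrix.one_mul]
  have hP : (1 - U * Uᴴ)ᴴ * (1 - U * Uᴴ) = 1 - U * Uᴴ := by
    rw [Matrix.conjTranspose_sub, Matrix.conjTranspose_one, Matrix.conjTranspose_mul,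
      Matrix.conjTranspose_conjTranspose, Matrix.sub_mul, Matrix.mul_sub, Matrix.mul_sub, hP2]
    simp
  have h := Matrix.l2_opNorm_conjTranspose_mul_self (1 - U * Uᴴ)
  rw [hP] at h
  nlinarith [norm_nonneg (1 - U * Uᴴ)]

end Norms

lemma Matrix.rank_lt_card_of_mulVec_eq_zero {K ι : Type*} [Field K] [Fintype ι] [DecidableEq ι]
    {M : Matrix ι ι K} {v : ι → K} (hv : v ≠ 0) (hMv : M *ᵥ v = 0) :
    M.rank < Fintype.card ι := by
  have hinj : ¬ Function.Injective M.mulVecLin := fun h => hv (h (by simpa using hMv))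
  have hrange : LinearMap.range M.mulVecLin ≠ ⊤ := fun h =>
    hinj (LinearMap.injective_iff_surjective.2 (LinearMap.range_eq_top.1 h))
  simpa [Matrix.rank] using Submodule.finrank_lt hrange

section SingularValues
variable {m p : Type*} [Fintype m] [Fintype p] [DecidableEq p]

lemma specNorm_eq_opNorm (Z : Matrix m p ℂ) : specNorm Z = ‖Z‖ := by
  rw [specNorm, Matrix.l2_opNorm_def, ← ContinuousLinearMap.sSup_unitClosedBall_eq_norm]
  congr 1
  ext t
  simp only [Set.mem_ofPred_eq, Set.mem_image, Metric.mem_closedBall, dist_zero_right]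
  constructor
  · rintro ⟨v, hv, rfl⟩
    refine ⟨WithLp.toLp 2 v, ?_, (l2_eq_norm _).symm⟩
    rwa [← l2_eq_norm, l2, Real.sqrt_le_one]
  · rintro ⟨x, hx, rfl⟩
    refine ⟨x.ofLp, ?_, (l2_eq_norm _).symm⟩
    rwa [← Real.sqrt_le_one, ← l2, l2_eq_norm]

lemma sval_nonneg (Z : Matrix m p ℂ) (k : ℕ) : 0 ≤ sval Z k := by
  refine Real.sInf_nonneg ?_
  rintro t ⟨Y, -, rfl⟩
  rw [specNorm_eq_opNorm]
  exact norm_nonneg _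

lemma sval_le_opNorm_sub (Z : Matrix m p ℂ) {k : ℕ} {Y : Matrix m p ℂ} (hY : Y.rank < k) :
    sval Z k ≤ ‖Z - Y‖ := by
  rw [← specNorm_eq_opNorm]
  refine csInf_le ⟨0, ?_⟩ ⟨Y, hY, rfl⟩
  rintro t ⟨Y', -, rfl⟩
  rw [specNorm_eq_opNorm]
  exact norm_nonneg _

lemma le_sval {Z : Matrix m p ℂ} {k : ℕ} {c : ℝ} (hk : 0 < k)
    (h : ∀ Y : Matrix m p ℂ, Y.rank < k → c ≤ ‖Z - Y‖) : c ≤ sval Z k := by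
  refine le_csInf ⟨_, 0, by simpa [Matrix.rank_zero] using hk, rfl⟩ ?_
  rintro t ⟨Y, hY, rfl⟩
  rw [specNorm_eq_opNorm]
  exact h Y hY

lemma sval_le_opNorm_sub_add (Z Z' : Matrix m p ℂ) (k : ℕ) :
    sval Z k ≤ ‖Z - Z'‖ + sval Z' k := by
  obtain rfl | hk := Nat.eq_zero_or_pos k
  · simp [sval]
  rw [← sub_le_iff_le_add']
  refine le_sval hk fun Y hY => ?_
  calc sval Z k - ‖Z - Z'‖ ≤ ‖Z - Y‖ - ‖Z - Z'‖ := by gcongr; exact sval_le_opNorm_sub Z hY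
    _ ≤ ‖Z' - Y‖ := by
        rw [sub_le_iff_le_add', ← sub_add_sub_cancel Z Z' Y]
        exact norm_add_le _ _

lemma sval_pos {Z : Matrix m p ℂ} {k : ℕ} (hk : 0 < k) (hZ : k ≤ Z.rank) : 0 < sval Z k := by
  let L := (Matrix.toEuclideanLin (𝕜 := ℂ) (m := m) (n := p)).trans
    LinearMap.toContinuousLinearMap
  have hrank (Y : Matrix m p ℂ) :
      (L Y : EuclideanSpace ℂ p →ₗ[ℂ] EuclideanSpace ℂ m).rank = Y.rank := by
    rw [Matrix.rank_eq_finrank_range_toLin Y (PiLp.basisFun 2 ℂ m) (PiLp.basisFun 2 ℂ p)]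
    exact (Module.finrank_eq_rank _ _).symm
  -- Rank is lower semicontinuous: the maps of rank at least `k` form an open set.
  obtain ⟨δ, hδ, hball⟩ := Metric.isOpen_iff.1 (isOpen_setOfPred_nat_le_rank (𝕜 := ℂ) k) (L Z)
    (by simpa [hrank] using hZ)
  refine hδ.trans_le (le_sval hk fun Y hY => ?_)
  by_contra! h
  have hLY : (k : Cardinal) ≤ (L Y : EuclideanSpace ℂ p →ₗ[ℂ] EuclideanSpace ℂ m).rank := by
    refine hball ?_
    rwa [Metric.mem_ball, dist_eq_norm, ← map_sub, ← Matrix.l2_opNorm_def, norm_sub_rev]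
  rw [hrank, Nat.cast_le] at hLY
  omega

open scoped ComplexOrder in
lemma sval_conjTranspose [DecidableEq m] (Z : Matrix m p ℂ) (k : ℕ) : sval Zᴴ k = sval Z k := by
  have hdist (Y : Matrix p m ℂ) : specNorm (Zᴴ - Y) = specNorm (Z - Yᴴ) := by
    rw [specNorm_eq_opNorm, specNorm_eq_opNorm, ← Matrix.l2_opNorm_conjTranspose,
      Matrix.conjTranspose_sub, Matrix.conjTranspose_conjTranspose]
  unfold sval
  congr 1
  ext t
  constructor
  · rintro ⟨Y, hY, rfl⟩
    exact ⟨Yᴴ, by rwa [Matrix.rank_conjTranspose], hdist Y⟩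
  · rintro ⟨Y, hY, rfl⟩
    refine ⟨Yᴴ, by rwa [Matrix.rank_conjTranspose], ?_⟩
    rw [hdist, Matrix.conjTranspose_conjTranspose]

variable {r : ℕ} {A : Matrix m (Fin r) ℂ} {M : Matrix (Fin r) (Fin r) ℂ} {B : Matrix (Fin r) p ℂ}

lemma sval_le_l2_mulVec (hA : ‖A‖ ≤ 1) (hB : ‖B‖ ≤ 1) {w : Fin r → ℂ} (hw : l2 w = 1) :
    sval (A * M * B) r ≤ l2 (M *ᵥ w) := by
  -- Deflating `M` along the unit vector `w` leaves a matrix of rank `< r` within `‖M w‖`.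
  set C : Matrix (Fin r) (Fin 1) ℂ := Matrix.replicateCol (Fin 1) w
  have hC : Cᴴ * C = 1 := by
    have h := l2_sq w
    rw [hw, one_pow] at h
    ext i j
    fin_cases i; fin_cases j
    simp only [C, Matrix.mul_apply, Matrix.conjTranspose_apply, Matrix.replicateCol_apply,
      RCLike.star_def, Complex.conj_mul', Matrix.one_apply_eq]
    exact_mod_cast h.symm
  have hw0 : w ≠ 0 := by rintro rfl; simp [l2] at hw
  have hkill : (M * (1 - C * Cᴴ)) *ᵥ w = 0 := by
    have hwC : w = C *ᵥ fun _ => 1 := by ext; simp [C, Matrix.mulVec, dotProduct]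
    rw [hwC, Matrix.mulVec_mulVec, Matrix.mul_assoc, Matrix.sub_mul, Matrix.mul_assoc C, hC]
    simp
  have hrank : (A * (M * (1 - C * Cᴴ)) * B).rank < r :=
    ((Matrix.rank_mul_le_left _ _).trans (Matrix.rank_mul_le_right _ _)).trans_lt
      (by simpa using Matrix.rank_lt_card_of_mulVec_eq_zero hw0 hkill)
  calc sval (A * M * B) r ≤ ‖A * M * B - A * (M * (1 - C * Cᴴ)) * B‖ :=
        sval_le_opNorm_sub _ hrank
    _ = ‖A * ((M * C) * Cᴴ * B)‖ := by
        simp only [Matrix.mul_sub, Matrix.sub_mul, Matrix.mul_one, Matrix.mul_assoc,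
          sub_sub_cancel]
    _ ≤ ‖M * C‖ := by
        refine (opNorm_mul_le_of_opNorm_le_one_left hA _).trans ?_
        refine (opNorm_mul_le_of_opNorm_le_one_right hB _).trans ?_
        exact opNorm_mul_le_of_opNorm_le_one_right
          (opNorm_conjTranspose_le_one_of_isometry hC) _
    _ ≤ l2 (M *ᵥ w) := by
        rw [← frob_replicateCol, Matrix.replicateCol_mulVec]
        exact opNorm_le_frob _

lemma sval_mul_l2_le_l2_mulVec (hA : ‖A‖ ≤ 1) (hB : ‖B‖ ≤ 1) (u : Fin r → ℂ) :
    sval (A * M * B) r * l2 u ≤ l2 (M *ᵥ u) := by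
  obtain rfl | hu := eq_or_ne u 0
  · simp [l2]
  have hl2 := l2_pos hu
  have hw : l2 ((l2 u : ℂ)⁻¹ • u) = 1 := by
    rw [l2_smul, norm_inv, Complex.norm_real, Real.norm_of_nonneg hl2.le, inv_mul_cancel₀ hl2.ne']
  have h := sval_le_l2_mulVec (M := M) hA hB hw
  rwa [Matrix.mulVec_smul, l2_smul, norm_inv, Complex.norm_real, Real.norm_of_nonneg hl2.le,
    ← div_eq_inv_mul, le_div_iff₀ hl2] at h

lemma sval_mul_frob_le_frob_mul (hA : ‖A‖ ≤ 1) (hB : ‖B‖ ≤ 1) {q : Type*} [Fintype q]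
    (X : Matrix (Fin r) q ℂ) : sval (A * M * B) r * frob X ≤ frob (M * X) :=
  mul_frob_le_frob_mul (sval_nonneg _ _) (sval_mul_l2_le_l2_mulVec hA hB) X

lemma sval_mul_frob_le_frob_sub [DecidableEq m] {Zt Z₀ : Matrix m p ℂ} {Ut : Matrix m (Fin r) ℂ}
    {St : Matrix (Fin r) (Fin r) ℂ} {Vt : Matrix p (Fin r) ℂ} {Q : Matrix p p ℂ}
    (hUt : Utᴴ * Ut = 1) (hVt : Vtᴴ * Vt = 1) (hQ : ‖Q‖ ≤ 1) (hZt : Zt = Ut * St * Vtᴴ)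
    (hZ₀ : Z₀ * Q = 0) : sval Zt r * frob (Vtᴴ * Q) ≤ frob (Zt - Z₀) := by
  subst hZt
  calc sval (Ut * St * Vtᴴ) r * frob (Vtᴴ * Q) ≤ frob (St * (Vtᴴ * Q)) :=
        sval_mul_frob_le_frob_mul (opNorm_le_one_of_isometry hUt)
          (opNorm_conjTranspose_le_one_of_isometry hVt) _
    _ = frob (Utᴴ * ((Ut * St * Vtᴴ - Z₀) * Q)) := by
        rw [Matrix.sub_mul, hZ₀, sub_zero]
        simp only [Matrix.mul_assoc, ← Matrix.mul_assoc Utᴴ Ut, hUt, Matrix.one_mul]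
    _ ≤ frob ((Ut * St * Vtᴴ - Z₀) * Q) :=
        (frob_mul_le_opNorm_mul _ _).trans
          (mul_le_of_le_one_left (frob_nonneg _) (opNorm_conjTranspose_le_one_of_isometry hUt))
    _ ≤ frob (Ut * St * Vtᴴ - Z₀) :=
        (frob_mul_le_frob_mul_opNorm _ _).trans (mul_le_of_le_one_right (frob_nonneg _) hQ)

end SingularValues

lemma norm_sum_sq_div_card_le {ι E : Type*} [SeminormedAddCommGroup E] (s : Finset ι)
    (f : ι → E) : ‖∑ i ∈ s, f i‖ ^ 2 / s.card ≤ ∑ i ∈ s, ‖f i‖ ^ 2 := by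
  refine div_le_of_le_mul₀ (Nat.cast_nonneg _) (Finset.sum_nonneg fun i _ => sq_nonneg _) ?_
  calc ‖∑ i ∈ s, f i‖ ^ 2 ≤ (∑ i ∈ s, ‖f i‖) ^ 2 := by gcongr; exact norm_sum_le _ _
    _ ≤ s.card * ∑ i ∈ s, ‖f i‖ ^ 2 := sq_sum_le_card_mul_sum_sq
    _ = _ := mul_comm _ _

section Hankel
variable {s n n1 n2 : ℕ}

def hankelIndex (hn : n1 + n2 = n + 1) (p : Fin n1 × Fin n2) : Fin n :=
  ⟨p.1 + p.2, by have := p.1.2; have := p.2.2; omega⟩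

lemma vhlAdj_apply (hn : n1 + n2 = n + 1) (Z : Matrix (Fin n1 × Fin s) (Fin n2) ℂ) (ℓ : Fin s)
    (i : Fin n) : vhlAdj n Z ℓ i = ∑ p with hankelIndex hn p = i, Z (p.1, ℓ) p.2 := by
  simp [vhlAdj, Finset.sum_filter, Fintype.sum_prod_type, hankelIndex, Fin.ext_iff]

lemma wt_eq_card (hn : n1 + n2 = n + 1) (i : Fin n) :
    wt n1 n2 i = (Finset.univ.filter fun p => hankelIndex hn p = i).card := by
  simp [wt, hankelIndex, Fin.ext_iff]

lemma calGadj_add (hn : n1 + n2 = n + 1) (A B : Matrix (Fin n1 × Fin s) (Fin n2) ℂ) :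
    calGadj hn (A + B) = calGadj hn A + calGadj hn B := by
  ext ℓ i
  simp [calGadj, Dinv, vhlAdj_apply hn, Finset.sum_add_distrib, add_div]

lemma frobInner_calGadj (hn : n1 + n2 = n + 1) (Z : Matrix (Fin n1 × Fin s) (Fin n2) ℂ)
    (X : Matrix (Fin s) (Fin n) ℂ) :
    frobInner (calGadj hn Z) X = frobInner Z (calG hn X) := by
  have hfiber (ℓ : Fin s) : ∑ i, conj (calGadj hn Z ℓ i) * X ℓ i =
      ∑ p : Fin n1 × Fin n2, conj (Z (p.1, ℓ) p.2) *
        (X ℓ (hankelIndex hn p) / (Real.sqrt (wt n1 n2 (hankelIndex hn p)) : ℂ)) := by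
    rw [← Finset.sum_fiberwise Finset.univ (hankelIndex hn)]
    refine Finset.sum_congr rfl fun i _ => ?_
    simp only [calGadj, Dinv, Matrix.of_apply, vhlAdj_apply hn, map_div₀, map_sum,
      Complex.conj_ofReal, Finset.sum_div, Finset.sum_mul]
    refine Finset.sum_congr rfl fun p hp => ?_
    rw [(Finset.mem_filter.1 hp).2]
    ring
  simp only [frobInner, hfiber, Fintype.sum_prod_type]
  rw [Finset.sum_comm]
  rfl

lemma frob_calGadj_le (hn : n1 + n2 = n + 1) (Z : Matrix (Fin n1 × Fin s) (Fin n2) ℂ) :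
    frob (calGadj hn Z) ≤ frob Z := by
  refine (pow_le_pow_iff_left₀ (frob_nonneg _) (frob_nonneg _) two_ne_zero).1 ?_
  rw [frob_sq, frob_sq]
  calc ∑ ℓ, ∑ i, ‖calGadj hn Z ℓ i‖ ^ 2
      ≤ ∑ ℓ, ∑ i, ∑ p with hankelIndex hn p = i, ‖Z (p.1, ℓ) p.2‖ ^ 2 := by
        gcongr with ℓ _ i _
        simp only [calGadj, Dinv, Matrix.of_apply, norm_div, Complex.norm_real, div_pow,
          Real.norm_of_nonneg (Real.sqrt_nonneg _), Real.sq_sqrt (Nat.cast_nonneg _),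
          vhlAdj_apply hn, wt_eq_card hn]
        exact norm_sum_sq_div_card_le _ _
    _ = ∑ ℓ, ∑ p : Fin n1 × Fin n2, ‖Z (p.1, ℓ) p.2‖ ^ 2 := by
        simp only [Finset.sum_fiberwise]
    _ = ∑ q, ∑ k, ‖Z q k‖ ^ 2 := by
        simp only [Fintype.sum_prod_type]
        exact Finset.sum_comm

end Hankel

lemma le_sqrt_mul_of_sq_le_mul_sq {a b c : ℝ} (ha : 0 ≤ a) (hb : 0 ≤ b) (h : a ^ 2 ≤ c * b ^ 2) :
    a ≤ √c * b :=
  calc a = √(a ^ 2) := (Real.sqrt_sq ha).symm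
    _ ≤ √(c * b ^ 2) := Real.sqrt_le_sqrt h
    _ = √c * b := by rw [Real.sqrt_mul' _ (sq_nonneg b), Real.sqrt_sq hb]

section Measurement
variable {s n : ℕ}

lemma measA_add (b : Fin n → Fin s → ℂ) (X Y : Matrix (Fin s) (Fin n) ℂ) :
    measA b (X + Y) = measA b X + measA b Y := by
  ext j
  simp [measA, mul_add, Finset.sum_add_distrib]

lemma frobInner_measAadj (b : Fin n → Fin s → ℂ) (X : Matrix (Fin s) (Fin n) ℂ) (y : Fin n → ℂ) :
    frobInner X (measAadj b y) = ∑ j, conj (measA b X j) * y j := by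
  simp only [frobInner, measAadj, measA, Matrix.of_apply, map_sum, map_mul, Complex.conj_conj,
    Finset.sum_mul]
  rw [Finset.sum_comm]
  exact Finset.sum_congr rfl fun j _ => Finset.sum_congr rfl fun ℓ _ => by ring

lemma re_frobInner_measAadj_measA (b : Fin n → Fin s → ℂ) (X : Matrix (Fin s) (Fin n) ℂ) :
    (frobInner X (measAadj b (measA b X))).re = l2 (measA b X) ^ 2 := by
  rw [frobInner_measAadj, l2_sq, Complex.re_sum]
  refine Finset.sum_congr rfl fun j _ => ?_
  rw [Complex.conj_mul']
  norm_cast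

lemma l2_measA_le {b : Fin n → Fin s → ℂ} {μ₀ : ℝ} (hb : ∀ j ℓ, ‖b j ℓ‖ ^ 2 ≤ μ₀)
    (X : Matrix (Fin s) (Fin n) ℂ) : l2 (measA b X) ≤ √(μ₀ * s) * frob X := by
  refine le_sqrt_mul_of_sq_le_mul_sq (l2_nonneg _) (frob_nonneg X) ?_
  rw [l2_sq, frob_sq, Finset.sum_comm, Finset.mul_sum]
  refine Finset.sum_le_sum fun j _ => ?_
  have hbj : ∑ ℓ : Fin s, ‖b j ℓ‖ ^ 2 ≤ μ₀ * s := by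
    simpa [mul_comm] using Finset.sum_le_sum fun ℓ (_ : ℓ ∈ Finset.univ) => hb j ℓ
  calc ‖measA b X j‖ ^ 2 ≤ (∑ ℓ, ‖b j ℓ‖ * ‖X ℓ j‖) ^ 2 := by
        gcongr
        simpa only [measA, norm_mul, Complex.norm_conj] using
          norm_sum_le Finset.univ fun ℓ => conj (b j ℓ) * X ℓ j
    _ ≤ (∑ ℓ, ‖b j ℓ‖ ^ 2) * ∑ ℓ, ‖X ℓ j‖ ^ 2 := Finset.sum_mul_sq_le_sq_mul_sq _ _ _
    _ ≤ μ₀ * s * ∑ ℓ, ‖X ℓ j‖ ^ 2 := by gcongr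

end Measurement

section TangentSpaces
variable {m p : Type*} [Fintype m] [Fintype p] {r : ℕ} {U : Matrix m (Fin r) ℂ}
  {V : Matrix p (Fin r) ℂ}

lemma frobInner_projT (A B : Matrix m p ℂ) :
    frobInner (projT U V A) B = frobInner A (projT U V B) := by
  simp only [frobInner_eq_trace, projT, Matrix.conjTranspose_add, Matrix.conjTranspose_sub,
    Matrix.conjTranspose_mul, Matrix.conjTranspose_conjTranspose, Matrix.add_mul, Matrix.sub_mul,
    Matrix.mul_add, Matrix.mul_sub, Matrix.trace_add, Matrix.trace_sub, Matrix.mul_assoc]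
  have hcycle (M : Matrix p p ℂ) : (V * (Vᴴ * M)).trace = (M * (V * Vᴴ)).trace := by
    rw [← Matrix.mul_assoc, Matrix.trace_mul_comm]
  simp only [hcycle, Matrix.mul_assoc]

lemma projT_projT (hU : Uᴴ * U = 1) (hV : Vᴴ * V = 1) (W : Matrix m p ℂ) :
    projT U V (projT U V W) = projT U V W := by
  simp only [projT, Matrix.mul_add, Matrix.add_mul, Matrix.mul_sub, Matrix.sub_mul,
    Matrix.mul_assoc, ← Matrix.mul_assoc Uᴴ U, hU, hV, Matrix.one_mul]
  abel

lemma frob_projT_le (hU : Uᴴ * U = 1) (hV : Vᴴ * V = 1) (W : Matrix m p ℂ) :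
    frob (projT U V W) ≤ frob W := by
  have h : frob (projT U V W) ^ 2 ≤ frob W * frob (projT U V W) := by
    rw [← re_frobInner_self, frobInner_projT, projT_projT hU hV]
    exact (Complex.re_le_norm _).trans (norm_frobInner_le _ _)
  nlinarith [frob_nonneg W, frob_nonneg (projT U V W)]

lemma mul_conjTranspose_mul_one_sub_eq_zero [DecidableEq p] (hV : Vᴴ * V = 1)
    {q : Type*} (A : Matrix q (Fin r) ℂ) : A * Vᴴ * (1 - V * Vᴴ) = 0 := by
  rw [Matrix.mul_assoc, Matrix.mul_sub, Matrix.mul_one, ← Matrix.mul_assoc Vᴴ, hV,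
    Matrix.one_mul, sub_self, Matrix.mul_zero]

lemma frob_sub_projT_le [DecidableEq m] [DecidableEq p] {r' : ℕ} {Ut : Matrix m (Fin r') ℂ}
    {Vt : Matrix p (Fin r') ℂ} (hU : Uᴴ * U = 1) (hV : Vᴴ * V = 1) (hUt : Utᴴ * Ut = 1)
    (hVt : Vtᴴ * Vt = 1) {W : Matrix m p ℂ} (hW : projT Ut Vt W = W) :
    frob (W - projT U V W) ≤
      (frob (Utᴴ * (1 - U * Uᴴ)) + frob (Vtᴴ * (1 - V * Vᴴ))) * frob W := by
  have hsplit : W - projT U V W = (Utᴴ * (1 - U * Uᴴ))ᴴ * (Utᴴ * W * (1 - V * Vᴴ)) +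
      ((1 - U * Uᴴ) * (1 - Ut * Utᴴ) * W * Vt) * (Vtᴴ * (1 - V * Vᴴ)) := by
    have hdiff : W - projT U V W = (1 - U * Uᴴ) * W * (1 - V * Vᴴ) := by
      simp only [projT, Matrix.sub_mul, Matrix.mul_sub, Matrix.one_mul, Matrix.mul_one,
        Matrix.mul_assoc]
      abel
    have hWt : W = Ut * (Utᴴ * W) + (1 - Ut * Utᴴ) * W * Vt * Vtᴴ := by
      conv_lhs => rw [← hW]
      simp only [projT, Matrix.sub_mul, Matrix.one_mul, Matrix.mul_assoc]
      abel
    rw [hdiff]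
    conv_lhs => rw [hWt]
    simp only [Matrix.conjTranspose_mul, Matrix.conjTranspose_sub, Matrix.conjTranspose_one,
      Matrix.conjTranspose_conjTranspose, Matrix.mul_add, Matrix.add_mul, Matrix.mul_assoc]
  rw [hsplit, add_mul]
  refine (frob_add_le _ _).trans (add_le_add ?_ ?_)
  · refine (frob_mul_le_frob_mul_opNorm _ _).trans ?_
    rw [frob_conjTranspose]
    refine mul_le_mul_of_nonneg_left ?_ (frob_nonneg _)
    refine (opNorm_mul_le_of_opNorm_le_one_right (opNorm_one_sub_le_one hV) _).trans ?_
    refine (opNorm_mul_le_of_opNorm_le_one_left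
      (opNorm_conjTranspose_le_one_of_isometry hUt) _).trans ?_
    exact opNorm_le_frob W
  · refine (frob_mul_le_opNorm_mul _ _).trans ?_
    rw [mul_comm]
    refine mul_le_mul_of_nonneg_left ?_ (frob_nonneg _)
    refine (opNorm_mul_le_of_opNorm_le_one_right (opNorm_le_one_of_isometry hVt) _).trans ?_
    rw [Matrix.mul_assoc]
    refine (opNorm_mul_le_of_opNorm_le_one_left (opNorm_one_sub_le_one hU) _).trans ?_
    refine (opNorm_mul_le_of_opNorm_le_one_left (opNorm_one_sub_le_one hUt) _).trans ?_
    exact opNorm_le_frob W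

lemma sval_mul_frob_tangent_angle_le [DecidableEq m] [DecidableEq p] {r' : ℕ} {Z Zt : Matrix m p ℂ}
    {S : Matrix (Fin r) (Fin r) ℂ} {Ut : Matrix m (Fin r') ℂ} {St : Matrix (Fin r') (Fin r') ℂ}
    {Vt : Matrix p (Fin r') ℂ} (hU : Uᴴ * U = 1) (hV : Vᴴ * V = 1) (hUt : Utᴴ * Ut = 1)
    (hVt : Vtᴴ * Vt = 1) (hZ : Z = U * S * Vᴴ) (hZt : Zt = Ut * St * Vtᴴ) :
    sval Zt r' * frob (Utᴴ * (1 - U * Uᴴ)) ≤ frob (Zt - Z) ∧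
      sval Zt r' * frob (Vtᴴ * (1 - V * Vᴴ)) ≤ frob (Zt - Z) := by
  have hZV : Z * (1 - V * Vᴴ) = 0 := by
    rw [hZ]; exact mul_conjTranspose_mul_one_sub_eq_zero hV _
  have hZU : Zᴴ * (1 - U * Uᴴ) = 0 := by
    rw [hZ]
    simpa [Matrix.conjTranspose_mul, Matrix.mul_assoc] using
      mul_conjTranspose_mul_one_sub_eq_zero hU (V * Sᴴ)
  have hZtH : Ztᴴ = Vt * Stᴴ * Utᴴ := by simp [hZt, Matrix.conjTranspose_mul, Matrix.mul_assoc]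
  refine ⟨?_, sval_mul_frob_le_frob_sub hUt hVt (opNorm_one_sub_le_one hV) hZt hZV⟩
  have h := sval_mul_frob_le_frob_sub hVt hUt (opNorm_one_sub_le_one hU) hZtH hZU
  rwa [sval_conjTranspose, ← Matrix.conjTranspose_sub, frob_conjTranspose] at h

end TangentSpaces

section LocalRIP
variable {s n n1 n2 r : ℕ} {hn : n1 + n2 = n + 1} {b : Fin n → Fin s → ℂ} {ε : ℝ}
  {U : Matrix (Fin n1 × Fin s) (Fin r) ℂ} {V : Matrix (Fin n2) (Fin r) ℂ}

lemma l2_measA_calGadj_projT_le (hU : Uᴴ * U = 1) (hV : Vᴴ * V = 1)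
    (hrip : ∀ Z : Matrix (Fin n1 × Fin s) (Fin n2) ℂ,
      frob (projT U V (calG hn (calGadj hn (projT U V Z)) -
        calG hn (measAadj b (measA b (calGadj hn (projT U V Z)))))) ≤ ε * frob Z)
    (W : Matrix (Fin n1 × Fin s) (Fin n2) ℂ) :
    l2 (measA b (calGadj hn (projT U V W))) ≤ √(1 + ε) * frob W := by
  set X := projT U V W
  set Y := calGadj hn X
  set D := calG hn Y - calG hn (measAadj b (measA b Y))
  have hX : frob X ≤ frob W := frob_projT_le hU hV W
  have hY : frob Y ≤ frob W := (frob_calGadj_le hn X).trans hX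
  have hdefect : (frobInner X D).re = frob Y ^ 2 - l2 (measA b Y) ^ 2 := by
    rw [frobInner_sub_right, Complex.sub_re, ← frobInner_calGadj, ← frobInner_calGadj,
      re_frobInner_self, re_frobInner_measAadj_measA]
  have hsmall : |(frobInner X D).re| ≤ ε * frob W ^ 2 := by
    have hXX : projT U V X = X := projT_projT hU hV W
    nth_rewrite 1 [← hXX]
    rw [frobInner_projT]
    calc |(frobInner X (projT U V D)).re| ≤ frob X * frob (projT U V D) :=
          (Complex.abs_re_le_norm _).trans (norm_frobInner_le _ _)
      _ ≤ frob W * (ε * frob W) := mul_le_mul hX (hrip W) (frob_nonneg _) (frob_nonneg _)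
      _ = ε * frob W ^ 2 := by ring
  refine le_sqrt_mul_of_sq_le_mul_sq (l2_nonneg _) (frob_nonneg W) ?_
  nlinarith [abs_le.1 hsmall, pow_le_pow_left₀ (frob_nonneg _) hY 2]

lemma l2_measA_calGadj_le {μ₀ : ℝ} (hU : Uᴴ * U = 1) (hV : Vᴴ * V = 1)
    (hb : ∀ j ℓ, ‖b j ℓ‖ ^ 2 ≤ μ₀)
    (hrip : ∀ Z : Matrix (Fin n1 × Fin s) (Fin n2) ℂ,
      frob (projT U V (calG hn (calGadj hn (projT U V Z)) -
        calG hn (measAadj b (measA b (calGadj hn (projT U V Z)))))) ≤ ε * frob Z)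
    (W : Matrix (Fin n1 × Fin s) (Fin n2) ℂ) :
    l2 (measA b (calGadj hn W)) ≤
      √(1 + ε) * frob W + √(μ₀ * s) * frob (W - projT U V W) := by
  have hsplit : measA b (calGadj hn W) =
      measA b (calGadj hn (projT U V W)) + measA b (calGadj hn (W - projT U V W)) := by
    rw [← measA_add, ← calGadj_add, add_sub_cancel]
  rw [hsplit]
  refine (l2_add_le _ _).trans (add_le_add (l2_measA_calGadj_projT_le hU hV hrip W) ?_)
  exact (l2_measA_le hb _).trans (by gcongr; exact frob_calGadj_le hn _)

end LocalRIP

lemma sqrt_mul_le_of_sval_perturbation {ε κ σ₀ σ d a : ℝ} (hε : ε ∈ Set.Ioc (0 : ℝ) 1)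
    (hκ : 1 ≤ κ) (hσ₀ : 0 < σ₀) (hd₀ : 0 ≤ d) (hweyl : σ₀ ≤ d + σ) (ha : σ * a ≤ d)
    (ha₀ : 0 ≤ a) (hd : d ≤ σ₀ * ε / (16 * √((1 + ε) * κ))) :
    √κ * a ≤ √(1 + ε) / 15 := by
  obtain ⟨hε₀, hε₁⟩ := hε
  have hs₁ : 1 ≤ √(1 + ε) := Real.one_le_sqrt.2 (by linarith)
  have hs₁sq : √(1 + ε) ^ 2 = 1 + ε := Real.sq_sqrt (by linarith)
  have hs₂ : 1 ≤ √κ := Real.one_le_sqrt.2 hκ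
  have hc : 1 ≤ √(1 + ε) * √κ := one_le_mul_of_one_le_of_one_le hs₁ hs₂
  rw [Real.sqrt_mul (by linarith), le_div_iff₀ (by positivity)] at hd
  have hd16 : 16 * d ≤ σ₀ := by nlinarith
  have hσ : 15 * σ₀ * a ≤ 16 * d := by nlinarith
  have hac : σ₀ * (15 * (a * (√(1 + ε) * √κ))) ≤ σ₀ * ε := by nlinarith
  have hac' := le_of_mul_le_mul_left hac hσ₀
  rw [le_div_iff₀ (by norm_num)]
  refine le_of_mul_le_mul_right ?_ (by linarith : 0 < √(1 + ε))
  nlinarith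

theorem one_sided_rip_at_t_general {s n n1 n2 r : ℕ} {ε μ0 : ℝ}
    (hn : n1 + n2 = n + 1)
    (hε : ε ∈ Set.Ioc (0 : ℝ) 1) (hμ0s : 1 ≤ μ0 * s)
    (b : Fin n → Fin s → ℂ) (hb : ∀ (j : Fin n) (ℓ : Fin s), ‖b j ℓ‖ ^ 2 ≤ μ0)
    (Xnat : Matrix (Fin s) (Fin n) ℂ)
    (U : Matrix (Fin n1 × Fin s) (Fin r) ℂ) (S : Matrix (Fin r) (Fin r) ℂ)
    (V : Matrix (Fin n2) (Fin r) ℂ)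
    (hrank : (vhl hn Xnat).rank = r) (hU : Uᴴ * U = 1) (hV : Vᴴ * V = 1)
    (hSVD : vhl hn Xnat = U * S * Vᴴ)
    (hrip : ∀ Z : Matrix (Fin n1 × Fin s) (Fin n2) ℂ,
      frob (projT U V (calG hn (calGadj hn (projT U V Z)) -
        calG hn (measAadj b (measA b (calGadj hn (projT U V Z)))))) ≤ ε * frob Z)
    (Zt : Matrix (Fin n1 × Fin s) (Fin n2) ℂ)
    (Ut : Matrix (Fin n1 × Fin s) (Fin r) ℂ) (St : Matrix (Fin r) (Fin r) ℂ)
    (Vt : Matrix (Fin n2) (Fin r) ℂ)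
    (hUt : Utᴴ * Ut = 1) (hVt : Vtᴴ * Vt = 1)
    (hSVDt : Zt = Ut * St * Vtᴴ)
    (hclose : frob (Zt - vhl hn Xnat) ≤
      sval (vhl hn Xnat) r * ε / (16 * Real.sqrt ((1 + ε) * (μ0 * s)))) :
    ∀ Z : Matrix (Fin n1 × Fin s) (Fin n2) ℂ,
      l2 (measA b (calGadj hn (projT Ut Vt Z))) ≤ 3 * Real.sqrt (1 + ε) * frob Z := by
  intro Z
  obtain rfl | hr := Nat.eq_zero_or_pos r
  · have hW : projT Ut Vt Z = 0 := by simp [Subsingleton.elim Ut 0, projT]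
    calc l2 (measA b (calGadj hn (projT Ut Vt Z))) = 0 := by
          simp [hW, calGadj, Dinv, vhlAdj, measA, l2]
      _ ≤ 3 * √(1 + ε) * frob Z := mul_nonneg (by positivity) (frob_nonneg Z)
  set W := projT Ut Vt Z
  obtain ⟨hα, hβ⟩ := sval_mul_frob_tangent_angle_le hU hV hUt hVt hSVD hSVDt
  have hweyl : sval (vhl hn Xnat) r ≤ frob (Zt - vhl hn Xnat) + sval Zt r :=
    (sval_le_opNorm_sub_add _ Zt r).trans
      (add_le_add_left ((opNorm_le_frob _).trans_eq (frob_sub_comm _ _)) _)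
  have hpos := sval_pos hr hrank.ge
  have hα' := sqrt_mul_le_of_sval_perturbation hε hμ0s hpos (frob_nonneg _) hweyl hα
    (frob_nonneg _) hclose
  have hβ' := sqrt_mul_le_of_sval_perturbation hε hμ0s hpos (frob_nonneg _) hweyl hβ
    (frob_nonneg _) hclose
  calc l2 (measA b (calGadj hn W))
      ≤ √(1 + ε) * frob W + √(μ0 * s) * frob (W - projT U V W) :=
        l2_measA_calGadj_le hU hV hb hrip W
    _ ≤ √(1 + ε) * frob W + √(μ0 * s) *
          ((frob (Utᴴ * (1 - U * Uᴴ)) + frob (Vtᴴ * (1 - V * Vᴴ))) * frob W) := by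
        gcongr
        exact frob_sub_projT_le hU hV hUt hVt (projT_projT hUt hVt Z)
    _ ≤ 3 * √(1 + ε) * frob W := by
        nlinarith [Real.sqrt_nonneg (1 + ε), frob_nonneg W]
    _ ≤ 3 * √(1 + ε) * frob Z := by
        gcongr
        exact frob_projT_le hUt hVt Z

/-- Lemma 1, first claim: under the local RIP at the tangent space T of
Z♮ = H(X♮), the entrywise bound on the b_j's, μ0 s ≥ 1, and provided the rank-r matrix
Z^t is within σ_r(Z♮) ε / (16 √((1+ε) μ0 s)) of Z♮ in Frobenius norm,
one has ‖A G* P_{T_t}‖ ≤ 3 √(1+ε). -/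
theorem one_sided_rip_at_t {s n n1 n2 r : ℕ} {ε μ0 : ℝ}
    (hs : 0 < s) (h1 : 0 < n1) (h2 : 0 < n2) (hn : n1 + n2 = n + 1)
    (hε : ε ∈ Set.Ioc (0 : ℝ) 1) (hμ0s : 1 ≤ μ0 * s)
    (b : Fin n → Fin s → ℂ) (hb : ∀ (j : Fin n) (ℓ : Fin s), ‖b j ℓ‖ ^ 2 ≤ μ0)
    (Xnat : Matrix (Fin s) (Fin n) ℂ)
    (U : Matrix (Fin n1 × Fin s) (Fin r) ℂ) (S : Matrix (Fin r) (Fin r) ℂ)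
    (V : Matrix (Fin n2) (Fin r) ℂ)
    (hrank : (vhl hn Xnat).rank = r) (hU : Uᴴ * U = 1) (hV : Vᴴ * V = 1)
    (hSVD : vhl hn Xnat = U * S * Vᴴ)
    (hrip : ∀ Z : Matrix (Fin n1 × Fin s) (Fin n2) ℂ,
      frob (projT U V (calG hn (calGadj hn (projT U V Z)) -
        calG hn (measAadj b (measA b (calGadj hn (projT U V Z)))))) ≤ ε * frob Z)
    (Zt : Matrix (Fin n1 × Fin s) (Fin n2) ℂ)
    (Ut : Matrix (Fin n1 × Fin s) (Fin r) ℂ) (St : Matrix (Fin r) (Fin r) ℂ)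
    (Vt : Matrix (Fin n2) (Fin r) ℂ)
    (hrankt : Zt.rank = r) (hUt : Utᴴ * Ut = 1) (hVt : Vtᴴ * Vt = 1)
    (hSVDt : Zt = Ut * St * Vtᴴ)
    (hclose : frob (Zt - vhl hn Xnat) ≤
      sval (vhl hn Xnat) r * ε / (16 * Real.sqrt ((1 + ε) * (μ0 * s)))) :
    ∀ Z : Matrix (Fin n1 × Fin s) (Fin n2) ℂ,
      l2 (measA b (calGadj hn (projT Ut Vt Z))) ≤ 3 * Real.sqrt (1 + ε) * frob Z :=
  one_sided_rip_at_t_general hn hε hμ0s b hb Xnat U S V hrank hU hV hSVD hrip Zt Ut St Vt hUt hVt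
    hSVDt hclose
end
end

section
/- Let Z♮ ∈ C^{m×p} have rank ≤ r, let Z^t ∈ C^{m×p} have rank r with tangent space T_t and orthogonal projection P_{T_t}, let L : C^{m×p} → C^{m×p} be any linear map, let W^t = P_{T_t}(Z^t − L(Z^t − Z♮)), and let Z^{t+1} be any best rank-r Frobenius-norm approximation of W^t. Then ‖Z^{t+1} − Z♮‖_F ≤ 2 ‖(I − P_{T_t})(Z♮)‖_F + 2 ‖P_{T_t}((I − L)(Z^t − Z♮))‖_F, where I denotes the identity map. -/
open Matrix MeasureTheory ProbabilityTheory
open scoped BigOperators ComplexConjugate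

noncomputable section

attribute [local instance] Matrix.frobeniusSeminormedAddCommGroup

lemma frob_eq {m p : Type*} [Fintype m] [Fintype p] (X : Matrix m p ℂ) :
    frob X = ‖X‖ := by
  rw [Matrix.frobenius_norm_def, frob, Real.sqrt_eq_rpow]
  norm_num [Real.rpow_natCast]

lemma projT_add {m p : Type*} [Fintype m] [Fintype p] {r : ℕ}
    (U : Matrix m (Fin r) ℂ) (V : Matrix p (Fin r) ℂ) (A B : Matrix m p ℂ) :
    projT U V (A + B) = projT U V A + projT U V B := by
  simp only [projT, Matrix.mul_add, Matrix.add_mul]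
  abel

lemma projT_fix {m p : Type*} [Fintype m] [Fintype p] {r : ℕ}
    (U : Matrix m (Fin r) ℂ) (S : Matrix (Fin r) (Fin r) ℂ) (V : Matrix p (Fin r) ℂ)
    (hU : Uᴴ * U = 1) (hV : Vᴴ * V = 1) :
    projT U V (U * S * Vᴴ) = U * S * Vᴴ := by
  have h1 : U * Uᴴ * (U * S * Vᴴ) = U * S * Vᴴ := by
    calc U * Uᴴ * (U * S * Vᴴ) = U * ((Uᴴ * U) * (S * Vᴴ)) := by
          simp only [Matrix.mul_assoc]
      _ = U * S * Vᴴ := by rw [hU, Matrix.one_mul, Matrix.mul_assoc]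
  have h2 : U * S * Vᴴ * V * Vᴴ = U * S * Vᴴ := by
    calc U * S * Vᴴ * V * Vᴴ = U * S * ((Vᴴ * V) * Vᴴ) := by simp only [Matrix.mul_assoc]
      _ = U * S * Vᴴ := by rw [hV, Matrix.one_mul]
  unfold projT
  rw [h1, h2]
  abel

/-- if W^t = P_{T_t}(Z^t − L(Z^t − Z♮)) and Z^{t+1} is a best rank-r
Frobenius-norm approximation of W^t, then
‖Z^{t+1} − Z♮‖_F ≤ 2‖(I − P_{T_t})(Z♮)‖_F + 2‖P_{T_t}((I − L)(Z^t − Z♮))‖_F. -/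
theorem onestep_decomposition_bound {m p r : ℕ}
    (Znat Zt : Matrix (Fin m) (Fin p) ℂ)
    (U : Matrix (Fin m) (Fin r) ℂ) (S : Matrix (Fin r) (Fin r) ℂ)
    (V : Matrix (Fin p) (Fin r) ℂ)
    (hZnat : Znat.rank ≤ r) (hZt : Zt.rank = r)
    (hU : Uᴴ * U = 1) (hV : Vᴴ * V = 1) (hSVD : Zt = U * S * Vᴴ)
    (L : Matrix (Fin m) (Fin p) ℂ →ₗ[ℂ] Matrix (Fin m) (Fin p) ℂ)
    (Wt Znext : Matrix (Fin m) (Fin p) ℂ)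
    (hW : Wt = projT U V (Zt - L (Zt - Znat)))
    (hbest : bestRankApprox r Znext Wt) :
    frob (Znext - Znat) ≤
      2 * frob (Znat - projT U V Znat) +
      2 * frob (projT U V ((Zt - Znat) - L (Zt - Znat))) := by
  have hPZt : projT U V Zt = Zt := by rw [hSVD]; exact projT_fix U S V hU hV
  set D := Zt - Znat with hD
  have hsplit : Wt = projT U V (D - L D) + projT U V Znat := by
    rw [hW, ← projT_add]
    congr 1
    rw [hD]; abel
  have key : Wt - Znat = projT U V (D - L D) - (Znat - projT U V Znat) := by
    rw [hsplit]; abel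
  have h1 : frob (Znext - Znat) ≤ frob (Wt - Znext) + frob (Wt - Znat) := by
    simp only [frob_eq]
    calc ‖Znext - Znat‖ = ‖(Wt - Znat) - (Wt - Znext)‖ := by congr 1; abel
      _ ≤ ‖Wt - Znat‖ + ‖Wt - Znext‖ := norm_sub_le _ _
      _ = ‖Wt - Znext‖ + ‖Wt - Znat‖ := by ring
  have h2 : frob (Wt - Znext) ≤ frob (Wt - Znat) := hbest.2 Znat hZnat
  have h3 : frob (Wt - Znat) ≤ frob (Znat - projT U V Znat) +
      frob (projT U V (D - L D)) := by
    simp only [frob_eq]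
    calc ‖Wt - Znat‖ = ‖projT U V (D - L D) - (Znat - projT U V Znat)‖ := by rw [key]
      _ ≤ ‖projT U V (D - L D)‖ + ‖Znat - projT U V Znat‖ := norm_sub_le _ _
      _ = _ := by ring
  linarith
end
end
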